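/- Let β, κ, γ, m > 0 and for ω > 0 let α(ω) = (β/κ)^{1/4}·(ω² − i(γ/β)ω)^{1/4} ∈ ℂ (principal fourth root z^{1/4} = exp((1/4)·Log z)). Define C_{2,ω} = cos(α(ω))/(sinh(α(ω)) + sin(α(ω))) − [(1 + cosh(α(ω))cos(α(ω)) + sinh(α(ω))sin(α(ω)))/(2 + 2·cosh(α(ω))cos(α(ω)))]·[(cosh(α(ω)) + cos(α(ω)))/(sinh(α(ω)) + sin(α(ω)))], Q₁(ω) = 1 − (4κ/m)·(α(ω)³/ω²)·C_{2,ω}, and Q̃₁(ω) = 1 + (2κ/(m·ω²))·α(ω)³·tan(α(ω)). Then |Q₁(ω) − Q̃₁(ω)| → 0 as ω → ∞. -/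

import Mathlib

/-!
Write `α = r √ω · w(γ/(βω))` with `r = (β/κ)^{1/4}` and `w(ε) = (1 - iε)^{1/4} = 1 - iε/4 + o(ε)`.
Then `Q₁ - Q̃₁ = -(2κ/m) (α³/ω²) (2 C_{2,ω} + tan α)`, where `α³/ω² = O(ω^{-1/2})`, and
`2 C_{2,ω} + tan α = (sin²α (1 + sinh α sin α) - sinh²α cos²α) /`
`(cos α (1 + cosh α cos α)(sinh α + sin α))` stays bounded: `Re α ~ r √ω` makes `sinh α`
exponentially large, while `|cos α| ≥ |Im α|` and `|Im α| ~ r γ / (4β √ω)` decays only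
polynomially, so `cos²α sinh α → ∞` and the terms `sinh²α cos²α` dominate both numerator and
denominator.
-/

/-- The characteristic wavenumber `α(ω) = (β/κ)^{1/4}·(ω² − i(γ/β)ω)^{1/4}`, where
`z^{1/4} = exp((1/4)·Log z)` is the principal fourth root. -/
noncomputable def alphaWN (β κ γ ω : ℝ) : ℂ :=
  ((β / κ) ^ ((1:ℝ)/4) : ℝ) *
    Complex.exp ((1/4 : ℂ) * Complex.log ((ω:ℂ) ^ 2 - Complex.I * ((γ:ℂ) / (β:ℂ)) * (ω:ℂ)))

/-- The coefficient `C_{2,ω}` appearing in the closed-form transfer function of the beam. -/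
noncomputable def C2coef (β κ γ ω : ℝ) : ℂ :=
  Complex.cos (alphaWN β κ γ ω) /
      (Complex.sinh (alphaWN β κ γ ω) + Complex.sin (alphaWN β κ γ ω)) -
    ((1 + Complex.cosh (alphaWN β κ γ ω) * Complex.cos (alphaWN β κ γ ω) +
        Complex.sinh (alphaWN β κ γ ω) * Complex.sin (alphaWN β κ γ ω)) /
      (2 + 2 * Complex.cosh (alphaWN β κ γ ω) * Complex.cos (alphaWN β κ γ ω))) *
    ((Complex.cosh (alphaWN β κ γ ω) + Complex.cos (alphaWN β κ γ ω)) /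
      (Complex.sinh (alphaWN β κ γ ω) + Complex.sin (alphaWN β κ γ ω)))

open Filter Topology Complex

lemma Real.sinh_sq_le_three {y : ℝ} (hy : |y| ≤ 1) : Real.sinh y ^ 2 ≤ 3 := by
  have hsinh1 : Real.sinh 1 < 3 / 2 := by
    rw [Real.sinh_eq]; linarith [Real.exp_one_lt_d9, Real.exp_pos (-1)]
  have h : |Real.sinh y| ≤ Real.sinh 1 := by rw [Real.abs_sinh]; exact Real.sinh_le_sinh.mpr hy
  nlinarith [sq_abs (Real.sinh y), abs_nonneg (Real.sinh y)]

lemma Real.cube_div_six_le_sinh {x : ℝ} (hx : 0 ≤ x) : x ^ 3 / 6 ≤ Real.sinh x := by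
  simpa [Nat.factorial] using le_hasSum (Real.hasSum_sinh x) 1 (fun j _ => by positivity)

namespace Complex

lemma sq_norm_cos (z : ℂ) : ‖cos z‖ ^ 2 = Real.cos z.re ^ 2 + Real.sinh z.im ^ 2 := by
  rw [cos_eq, ← ofReal_cos, ← ofReal_cosh, ← ofReal_sin, ← ofReal_sinh, ← ofReal_mul,
    ← ofReal_mul, sub_eq_add_neg, ← neg_mul, ← ofReal_neg, Complex.sq_norm, normSq_add_mul_I]
  linear_combination Real.sinh z.im ^ 2 * Real.sin_sq_add_cos_sq z.re +
    Real.cos z.re ^ 2 * Real.cosh_sq z.im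

lemma sq_norm_sin (z : ℂ) : ‖sin z‖ ^ 2 = Real.sin z.re ^ 2 + Real.sinh z.im ^ 2 := by
  rw [sin_eq, ← ofReal_cos, ← ofReal_cosh, ← ofReal_sin, ← ofReal_sinh, ← ofReal_mul,
    ← ofReal_mul, Complex.sq_norm, normSq_add_mul_I]
  linear_combination Real.sinh z.im ^ 2 * Real.sin_sq_add_cos_sq z.re +
    Real.sin z.re ^ 2 * Real.cosh_sq z.im

lemma sq_norm_sinh (z : ℂ) : ‖sinh z‖ ^ 2 = Real.sinh z.re ^ 2 + Real.sin z.im ^ 2 := by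
  have h := sq_norm_sin (z * I)
  rw [sin_mul_I, norm_mul, norm_I, mul_one] at h
  simpa [Real.sin_neg, add_comm] using h

lemma sq_norm_cosh (z : ℂ) : ‖cosh z‖ ^ 2 = Real.sinh z.re ^ 2 + Real.cos z.im ^ 2 := by
  have h := sq_norm_cos (z * I)
  rw [cos_mul_I] at h
  simpa [add_comm] using h

lemma norm_cos_le_two {z : ℂ} (hz : |z.im| ≤ 1) : ‖cos z‖ ≤ 2 :=
  le_of_sq_le_sq (by nlinarith [sq_norm_cos z, Real.cos_sq_le_one z.re, Real.sinh_sq_le_three hz])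
    zero_le_two

lemma norm_sin_le_two {z : ℂ} (hz : |z.im| ≤ 1) : ‖sin z‖ ≤ 2 :=
  le_of_sq_le_sq (by nlinarith [sq_norm_sin z, Real.sin_sq_le_one z.re, Real.sinh_sq_le_three hz])
    zero_le_two

lemma abs_im_le_norm_cos (z : ℂ) : |z.im| ≤ ‖cos z‖ := by
  have h : |z.im| ≤ |Real.sinh z.im| := by
    rw [Real.abs_sinh]; exact Real.self_le_sinh_iff.mpr (abs_nonneg _)
  refine abs_le_of_sq_le_sq ?_ (norm_nonneg _)
  nlinarith [sq_norm_cos z, sq_abs (Real.sinh z.im), sq_abs z.im, abs_nonneg z.im]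

lemma sinh_re_le_norm_sinh (z : ℂ) : Real.sinh z.re ≤ ‖sinh z‖ :=
  le_of_sq_le_sq (by nlinarith [sq_norm_sinh z, sq_nonneg (Real.sin z.im)]) (norm_nonneg _)

lemma norm_sinh_le_sinh_re_add_one {z : ℂ} (hz : 0 ≤ z.re) : ‖sinh z‖ ≤ Real.sinh z.re + 1 :=
  have hsinh : 0 ≤ Real.sinh z.re := Real.sinh_nonneg_iff.mpr hz
  le_of_sq_le_sq (by nlinarith [sq_norm_sinh z, Real.sin_sq_le_one z.im]) (by positivity)

lemma sinh_re_le_norm_cosh (z : ℂ) : Real.sinh z.re ≤ ‖cosh z‖ :=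
  le_of_sq_le_sq (by nlinarith [sq_norm_cosh z, sq_nonneg (Real.cos z.im)]) (norm_nonneg _)

end Complex

def farStrip : Set ℂ := {z | |z.im| ≤ 1 ∧ 100 ≤ z.im ^ 2 * Real.sinh z.re}

noncomputable def beamRemainder (z : ℂ) : ℂ :=
  (sin z ^ 2 * (1 + sinh z * sin z) - sinh z ^ 2 * cos z ^ 2) /
    (cos z * (1 + cosh z * cos z) * (sinh z + sin z))

namespace farStrip

variable {z : ℂ}

lemma sinh_re_pos (hz : z ∈ farStrip) : 0 < Real.sinh z.re := by
  by_contra! h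
  nlinarith [hz.2, mul_nonpos_of_nonneg_of_nonpos (sq_nonneg z.im) h]

lemma hundred_le_sq_norm_cos_mul_sinh_re (hz : z ∈ farStrip) :
    100 ≤ ‖cos z‖ ^ 2 * Real.sinh z.re := by
  have h := sq_le_sq' (neg_le_of_abs_le (abs_im_le_norm_cos z))
    (le_of_abs_le (abs_im_le_norm_cos z))
  exact hz.2.trans (mul_le_mul_of_nonneg_right h (sinh_re_pos hz).le)

lemma le_norm_denom (hz : z ∈ farStrip) :
    ‖cos z‖ ^ 2 * Real.sinh z.re ^ 2 / 4 ≤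
      ‖cos z * (1 + cosh z * cos z) * (sinh z + sin z)‖ := by
  have hc := norm_cos_le_two hz.1
  have hs := norm_sin_le_two hz.1
  have hK := hundred_le_sq_norm_cos_mul_sinh_re hz
  have hX := sinh_re_pos hz
  have hcX : 50 ≤ Real.sinh z.re * ‖cos z‖ := by
    nlinarith [mul_le_mul_of_nonneg_right hc (mul_nonneg hX.le (norm_nonneg (cos z)))]
  have hcosh : Real.sinh z.re * ‖cos z‖ / 2 ≤ ‖1 + cosh z * cos z‖ := by
    have h := norm_sub_norm_le (cosh z * cos z) (-1)
    rw [norm_neg, norm_one, sub_neg_eq_add, add_comm, norm_mul] at h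
    nlinarith [sinh_re_le_norm_cosh z, norm_nonneg (cos z)]
  have hsinh : Real.sinh z.re / 2 ≤ ‖sinh z + sin z‖ := by
    have h := norm_sub_norm_le (sinh z) (-sin z)
    rw [norm_neg, sub_neg_eq_add] at h
    nlinarith [sinh_re_le_norm_sinh z]
  rw [norm_mul, norm_mul]
  calc ‖cos z‖ ^ 2 * Real.sinh z.re ^ 2 / 4
      = ‖cos z‖ * (Real.sinh z.re * ‖cos z‖ / 2) * (Real.sinh z.re / 2) := by ring
    _ ≤ _ := by gcongr

lemma norm_numer_le (hz : z ∈ farStrip) :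
    ‖sin z ^ 2 * (1 + sinh z * sin z) - sinh z ^ 2 * cos z ^ 2‖ ≤
      2 * ‖cos z‖ ^ 2 * Real.sinh z.re ^ 2 := by
  have hc := norm_cos_le_two hz.1
  have hs := norm_sin_le_two hz.1
  have hK := hundred_le_sq_norm_cos_mul_sinh_re hz
  have hX := sinh_re_pos hz
  have hS := norm_sinh_le_sinh_re_add_one (Real.sinh_pos_iff.mp hX).le
  calc ‖sin z ^ 2 * (1 + sinh z * sin z) - sinh z ^ 2 * cos z ^ 2‖
      ≤ ‖sin z‖ ^ 2 * (1 + ‖sinh z‖ * ‖sin z‖) + ‖sinh z‖ ^ 2 * ‖cos z‖ ^ 2 := by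
        refine (norm_sub_le _ _).trans ?_
        simp only [norm_mul, norm_pow]
        gcongr
        exact (norm_add_le _ _).trans (by rw [norm_one, norm_mul])
    _ ≤ 2 ^ 2 * (1 + (Real.sinh z.re + 1) * 2) + (Real.sinh z.re + 1) ^ 2 * ‖cos z‖ ^ 2 := by
        gcongr
    _ ≤ 2 * ‖cos z‖ ^ 2 * Real.sinh z.re ^ 2 := by
        have hc4 : ‖cos z‖ ^ 2 ≤ 4 := by nlinarith [norm_nonneg (cos z)]
        nlinarith [mul_le_mul_of_nonneg_right hK hX.le, mul_le_mul_of_nonneg_right hc4 hX.le]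

lemma norm_denom_pos (hz : z ∈ farStrip) :
    0 < ‖cos z * (1 + cosh z * cos z) * (sinh z + sin z)‖ := by
  have hK := hundred_le_sq_norm_cos_mul_sinh_re hz
  have hX := sinh_re_pos hz
  exact lt_of_lt_of_le (by nlinarith) (le_norm_denom hz)

lemma norm_beamRemainder_le (hz : z ∈ farStrip) : ‖beamRemainder z‖ ≤ 8 := by
  rw [beamRemainder, norm_div, div_le_iff₀ (norm_denom_pos hz)]
  linarith [norm_numer_le hz, le_norm_denom hz]

end farStrip

lemma ofReal_mul_mem_farStrip {R ε : ℝ} {w : ℂ} (hR : 0 ≤ R) (hε : 0 ≤ ε) (hε4 : ε ≤ 4)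
    (hw : ‖w - (1 - I * ε / 4)‖ ≤ ε / 8) (hsmall : 3 * R * ε ≤ 8)
    (hlarge : 100 * (64 * 48) ≤ R ^ 5 * ε ^ 2) : (R : ℂ) * w ∈ farStrip := by
  have hre : |w.re - 1| ≤ ε / 8 := by
    simpa using (abs_re_le_norm _).trans hw
  have him : |w.im + ε / 4| ≤ ε / 8 := by
    simpa using (abs_im_le_norm _).trans hw
  rw [abs_le] at hre him
  rw [farStrip, Set.mem_ofPred_eq, re_ofReal_mul, im_ofReal_mul]
  have hsq : R ^ 2 * ε ^ 2 / 64 ≤ (R * w.im) ^ 2 := by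
    have h : R * (ε / 8) ≤ R * -w.im := mul_le_mul_of_nonneg_left (by linarith) hR
    nlinarith [mul_nonneg hR hε]
  have hsinh : R ^ 3 / 48 ≤ Real.sinh (R * w.re) := by
    have h := Real.cube_div_six_le_sinh (by positivity : 0 ≤ R / 2)
    calc R ^ 3 / 48 = (R / 2) ^ 3 / 6 := by ring
      _ ≤ Real.sinh (R / 2) := h
      _ ≤ Real.sinh (R * w.re) := Real.sinh_le_sinh.mpr (by nlinarith)
  constructor
  · rw [abs_le]; constructor <;> nlinarith
  · calc (100 : ℝ) ≤ R ^ 2 * ε ^ 2 / 64 * (R ^ 3 / 48) := by nlinarith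
      _ ≤ _ := by gcongr

lemma two_mul_C2coef_add_tan {β κ γ ω : ℝ} (h : alphaWN β κ γ ω ∈ farStrip) :
    2 * C2coef β κ γ ω + tan (alphaWN β κ γ ω) = beamRemainder (alphaWN β κ γ ω) := by
  have hden := norm_pos_iff.mp (farStrip.norm_denom_pos h)
  rw [C2coef, beamRemainder]
  generalize alphaWN β κ γ ω = z at hden ⊢
  simp only [mul_ne_zero_iff] at hden
  obtain ⟨⟨hc, h1⟩, hs⟩ := hden
  have h1' : 1 + cos z * cosh z ≠ 0 := by rwa [mul_comm]
  have h2 : 2 + 2 * cosh z * cos z = 2 * (1 + cosh z * cos z) := by ring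
  rw [tan_eq_sin_div_cos, h2]
  field_simp
  linear_combination (cos z * cosh z - sinh z * sin z) * sin_sq_add_cos_sq z -
    cos z ^ 2 * cosh_sq_sub_sinh_sq z

noncomputable def fourthRootOneSubI (ε : ℝ) : ℂ := exp (1 / 4 * log (1 - I * ε))

lemma fourthRootOneSubI_zero : fourthRootOneSubI 0 = 1 := by
  simp [fourthRootOneSubI]

lemma hasDerivAt_fourthRootOneSubI : HasDerivAt fourthRootOneSubI (-I / 4) 0 := by
  have hlin : HasDerivAt (fun u : ℂ => 1 - I * u) (-I) 0 := by
    simpa using ((hasDerivAt_id (0:ℂ)).const_mul I).const_sub 1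
  have h : HasDerivAt (fun u : ℂ => exp (1 / 4 * log (1 - I * u))) (-I / 4) ((0:ℝ):ℂ) := by
    rw [ofReal_zero]
    exact ((hlin.clog (by simp)).const_mul (1 / 4 : ℂ)).cexp.congr_deriv (by simp; ring)
  exact h.comp_ofReal

lemma eventually_norm_fourthRootOneSubI_sub_le :
    ∀ᶠ ε in 𝓝 0, ‖fourthRootOneSubI ε - (1 - I * ε / 4)‖ ≤ |ε| / 8 := by
  have h := (hasDerivAt_iff_isLittleO_nhds_zero.mp hasDerivAt_fourthRootOneSubI).bound
    (by norm_num : (0:ℝ) < 1 / 8)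
  filter_upwards [h] with ε hε
  rw [zero_add, fourthRootOneSubI_zero, real_smul, Real.norm_eq_abs] at hε
  calc ‖fourthRootOneSubI ε - (1 - I * ε / 4)‖ = ‖fourthRootOneSubI ε - 1 - ε * (-I / 4)‖ := by
        ring_nf
    _ ≤ |ε| / 8 := by linarith

lemma alphaWN_eq (β κ γ : ℝ) {ω : ℝ} (hω : 0 < ω) :
    alphaWN β κ γ ω =
      (((β / κ) ^ ((1:ℝ) / 4) * √ω : ℝ) : ℂ) * fourthRootOneSubI (γ / β / ω) := by
  have hz : (ω:ℂ) ^ 2 - I * ((γ:ℂ) / (β:ℂ)) * (ω:ℂ) =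
      ((ω ^ 2 : ℝ) : ℂ) * (1 - I * ((γ / β / ω : ℝ) : ℂ)) := by
    have : (ω:ℂ) ≠ 0 := ofReal_ne_zero.mpr hω.ne'
    push_cast; field_simp
  have hne : (1 - I * ((γ / β / ω : ℝ) : ℂ)) ≠ 0 := by
    intro h; simpa using congrArg re h
  have hsqrt : Real.exp (1 / 4 * Real.log (ω ^ 2)) = √ω := by
    rw [Real.log_pow, Real.sqrt_eq_rpow, Real.rpow_def_of_pos hω]; push_cast; ring_nf
  rw [alphaWN, fourthRootOneSubI, hz, log_ofReal_mul (by positivity) hne, mul_add, exp_add,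
    ← ofReal_ofNat, ← ofReal_one, ← ofReal_div, ← ofReal_mul, ← ofReal_exp, hsqrt]
  push_cast; ring

lemma tendsto_alphaWN_cube_div_sq (β κ γ : ℝ) :
    Tendsto (fun ω : ℝ => alphaWN β κ γ ω ^ 3 / (ω:ℂ) ^ 2) atTop (𝓝 0) := by
  have hroot : Tendsto (fun ω : ℝ => fourthRootOneSubI (γ / β / ω)) atTop (𝓝 1) := by
    rw [← fourthRootOneSubI_zero]
    exact hasDerivAt_fourthRootOneSubI.continuousAt.tendsto.comp
      (tendsto_const_nhds.div_atTop tendsto_id)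
  have hinv : Tendsto (fun ω : ℝ => ((√ω)⁻¹ : ℝ)) atTop (𝓝 0) :=
    tendsto_inv_atTop_zero.comp Real.tendsto_sqrt_atTop
  have h := ((hroot.pow 3).const_mul ((((β / κ) ^ ((1:ℝ) / 4) : ℝ) : ℂ) ^ 3)).mul
    ((continuous_ofReal.tendsto 0).comp hinv)
  rw [ofReal_zero, mul_zero] at h
  refine h.congr' ?_
  filter_upwards [eventually_gt_atTop 0] with ω hω
  have hsq : ((√ω : ℝ) : ℂ) ^ 2 = ω := by rw [← ofReal_pow, Real.sq_sqrt hω.le]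
  have hω' : ((√ω : ℝ) : ℂ) ≠ 0 := ofReal_ne_zero.mpr (Real.sqrt_pos.mpr hω).ne'
  rw [alphaWN_eq β κ γ hω, ← hsq, Function.comp_apply]
  push_cast
  field_simp

lemma eventually_alphaWN_mem_farStrip {β κ γ : ℝ} (hβ : 0 < β) (hκ : 0 < κ) (hγ : 0 < γ) :
    ∀ᶠ ω in atTop, alphaWN β κ γ ω ∈ farStrip := by
  set r := (β / κ) ^ ((1:ℝ) / 4) with hr_def
  have hr : 0 < r := Real.rpow_pos_of_pos (div_pos hβ hκ) _
  have hg : 0 < γ / β := div_pos hγ hβ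
  have hε : Tendsto (fun ω : ℝ => γ / β / ω) atTop (𝓝 0) :=
    tendsto_const_nhds.div_atTop tendsto_id
  have hsmall : Tendsto (fun ω : ℝ => 3 * r * (γ / β) * (√ω)⁻¹) atTop (𝓝 0) := by
    simpa using (tendsto_inv_atTop_zero.comp Real.tendsto_sqrt_atTop).const_mul (3 * r * (γ / β))
  have hlarge : Tendsto (fun ω : ℝ => r ^ 5 * (γ / β) ^ 2 * √ω) atTop atTop :=
    Real.tendsto_sqrt_atTop.const_mul_atTop (by positivity)
  filter_upwards [eventually_gt_atTop 0, hε.eventually eventually_norm_fourthRootOneSubI_sub_le,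
    hε.eventually (eventually_le_nhds (by norm_num : (0:ℝ) < 4)),
    hsmall.eventually (eventually_le_nhds (by norm_num : (0:ℝ) < 8)),
    hlarge.eventually_ge_atTop (100 * (64 * 48))] with ω hω hw hε4 hs hl
  have hε0 : 0 ≤ γ / β / ω := by positivity
  have hsqrt : √ω ^ 2 = ω := Real.sq_sqrt hω.le
  rw [abs_of_nonneg hε0] at hw
  rw [alphaWN_eq β κ γ hω, ← hr_def]
  refine ofReal_mul_mem_farStrip (by positivity) hε0 hε4 hw ?_ ?_
  · refine le_trans (le_of_eq ?_) hs
    field_simp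
    exact hsqrt
  · refine hl.trans (le_of_eq ?_)
    field_simp
    linear_combination (-(ω + √ω ^ 2)) * hsqrt

theorem Q1_asymptotic_form_general (β κ γ m : ℝ) (hβ : 0 < β) (hκ : 0 < κ) (hγ : 0 < γ) :
    Filter.Tendsto
      (fun ω : ℝ => norm
        ((1 - (4 * (κ:ℂ) / (m:ℂ)) * ((alphaWN β κ γ ω) ^ 3 / (ω:ℂ) ^ 2) * C2coef β κ γ ω) -
         (1 + (2 * (κ:ℂ) / ((m:ℂ) * (ω:ℂ) ^ 2)) * (alphaWN β κ γ ω) ^ 3 *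
            Complex.tan (alphaWN β κ γ ω))))
      Filter.atTop (nhds 0) := by
  have hdiff : ∀ ω : ℝ,
      (1 - (4 * (κ:ℂ) / (m:ℂ)) * ((alphaWN β κ γ ω) ^ 3 / (ω:ℂ) ^ 2) * C2coef β κ γ ω) -
        (1 + (2 * (κ:ℂ) / ((m:ℂ) * (ω:ℂ) ^ 2)) * (alphaWN β κ γ ω) ^ 3 *
          tan (alphaWN β κ γ ω)) =
      -(2 * κ / m) * (alphaWN β κ γ ω ^ 3 / (ω:ℂ) ^ 2 *
        (2 * C2coef β κ γ ω + tan (alphaWN β κ γ ω))) := fun ω => by ring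
  have hbdd : IsBoundedUnder (· ≤ ·) atTop
      (norm ∘ fun ω => 2 * C2coef β κ γ ω + tan (alphaWN β κ γ ω)) := by
    refine isBoundedUnder_of_eventually_le (a := 8) ?_
    filter_upwards [eventually_alphaWN_mem_farStrip hβ hκ hγ] with ω h
    rw [Function.comp_apply, two_mul_C2coef_add_tan h]
    exact farStrip.norm_beamRemainder_le h
  have h := ((tendsto_alphaWN_cube_div_sq β κ γ).zero_mul_isBoundedUnder_le hbdd).const_mul
    (-(2 * κ / m : ℂ))
  rw [mul_zero] at h
  simpa only [hdiff, norm_zero] using h.norm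

/-- `|Q₁(ω) − Q̃₁(ω)| → 0` as `ω → ∞`, where
`Q₁(ω) = 1 − (4κ/m)(α(ω)³/ω²)C_{2,ω}` and
`Q̃₁(ω) = 1 + (2κ/(mω²))α(ω)³ tan(α(ω))`. -/
theorem Q1_asymptotic_form (β κ γ m : ℝ) (hβ : 0 < β) (hκ : 0 < κ) (hγ : 0 < γ)
    (hm : 0 < m) :
    Filter.Tendsto
      (fun ω : ℝ => norm
        ((1 - (4 * (κ:ℂ) / (m:ℂ)) * ((alphaWN β κ γ ω) ^ 3 / (ω:ℂ) ^ 2) * C2coef β κ γ ω) -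
         (1 + (2 * (κ:ℂ) / ((m:ℂ) * (ω:ℂ) ^ 2)) * (alphaWN β κ γ ω) ^ 3 *
            Complex.tan (alphaWN β κ γ ω))))
      Filter.atTop (nhds 0) :=
  Q1_asymptotic_form_general β κ γ m hβ hκ hγ
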